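/- For the dispersion relation p(k) = k^4 - k^2 on the integers, for any fixed real number A and any dyadic number N ≥ 1, the number of pairs of integers (k1, k2) with k1 + k2 fixed and |A + p(k1) + p(k2)| ≤ N is bounded by C · N^{1/4} for a universal constant C. -/
import Mathlib

private lemma gap_lemma (u v c : ℝ) (hv : 2 ≤ v) (huv : v ≤ u) (hc : -4 ≤ c) :
    (u - v)^4 ≤ (u^4 + c*u^2) - (v^4 + c*v^2) := by
  have huv' : 0 ≤ u - v := by linarith
  have hv2 : 0 ≤ v - 2 := by linarith
  have h1 : 0 ≤ (u^2 - v^2) * (c + 4) := by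
    apply mul_nonneg _ (by linarith)
    nlinarith
  nlinarith [h1, mul_nonneg (mul_nonneg huv' huv') huv',
    mul_nonneg hv2 (mul_nonneg huv' huv'),
    mul_nonneg (mul_nonneg hv2 huv') huv',
    mul_nonneg (mul_nonneg huv' huv') (mul_nonneg huv' hv2),
    mul_nonneg huv' hv2, sq_nonneg (u-v), sq_nonneg (u+v)]

private lemma pow4_le_rpow {a b : ℝ} (ha : 0 ≤ a) (h : a^4 ≤ b) :
    a ≤ b ^ ((1:ℝ)/4) := by
  have h1 : a = (a^(4:ℕ)) ^ ((1:ℝ)/4) := by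
    rw [← Real.rpow_natCast a 4, ← Real.rpow_mul ha]
    norm_num
  rw [h1]
  exact Real.rpow_le_rpow (by positivity) h (by norm_num)

private lemma core_count (c B M : ℝ) (hc : -4 ≤ c) (hM : 0 ≤ M) :
    {x : ℤ | 2 ≤ x ∧ |B + (x:ℝ)^4 + c * (x:ℝ)^2| ≤ M}.Finite ∧
    ({x : ℤ | 2 ≤ x ∧ |B + (x:ℝ)^4 + c * (x:ℝ)^2| ≤ M}.ncard : ℝ)
      ≤ (2*M) ^ ((1:ℝ)/4) + 1 := by
  set Y := {x : ℤ | 2 ≤ x ∧ |B + (x:ℝ)^4 + c * (x:ℝ)^2| ≤ M} with hY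
  have hrpow : (0:ℝ) ≤ (2*M) ^ ((1:ℝ)/4) := Real.rpow_nonneg (by linarith) _
  rcases Y.eq_empty_or_nonempty with h | h
  · rw [h]; simp; linarith
  · obtain ⟨m, hmY, hmin⟩ :=
      Int.exists_least_of_bdd (P := fun z => z ∈ Y) ⟨2, fun z hz => hz.1⟩ h
    set d : ℤ := ⌊(2*M) ^ ((1:ℝ)/4)⌋ with hd
    have hd0 : 0 ≤ d := Int.floor_nonneg.2 hrpow
    have hsub : Y ⊆ Set.Icc m (m + d) := by
      intro x hx
      refine ⟨hmin x hx, ?_⟩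
      have hgap : ((x - m : ℤ):ℝ)^4 ≤ 2*M := by
        have := gap_lemma (x:ℝ) (m:ℝ) c (by exact_mod_cast hmY.1)
          (by exact_mod_cast hmin x hx) hc
        have habs1 := abs_le.1 hx.2
        have habs2 := abs_le.1 hmY.2
        push_cast
        nlinarith [this]
      have h2 : ((x - m : ℤ):ℝ) ≤ (2*M) ^ ((1:ℝ)/4) := by
        apply pow4_le_rpow _ hgap
        have := hmin x hx
        simp only [Int.cast_sub, sub_nonneg, Int.cast_le]
        exact this
      have := Int.le_floor.2 h2
      omega
    have hfin : Y.Finite := (Set.finite_Icc m (m + d)).subset hsub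
    refine ⟨hfin, ?_⟩
    have h1 : Y.ncard ≤ (Set.Icc m (m + d)).ncard :=
      Set.ncard_le_ncard hsub (Set.finite_Icc _ _)
    have h2 : (Set.Icc m (m + d)).ncard = (d + 1).toNat := by
      rw [← Finset.coe_Icc, Set.ncard_coe_finset, Int.card_Icc]
      congr 1
      omega
    have h3 : ((d + 1).toNat : ℝ) = (d : ℝ) + 1 := by
      exact_mod_cast Int.toNat_of_nonneg (by omega : (0:ℤ) ≤ d + 1)
    have h4 : (d : ℝ) ≤ (2*M) ^ ((1:ℝ)/4) := Int.floor_le _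
    calc (Y.ncard : ℝ) ≤ ((Set.Icc m (m + d)).ncard : ℝ) := by exact_mod_cast h1
    _ = (d:ℝ) + 1 := by rw [h2, h3]
    _ ≤ (2*M) ^ ((1:ℝ)/4) + 1 := by linarith

/-- For the dispersion relation `p k = k^4 - k^2` on `ℤ`, for any fixed `A : ℝ` and any
`N ≥ 1`, the number of integer pairs `(k₁, k₂)` with fixed sum `k` and
`|A + p k₁ + p k₂| ≤ N` is bounded by `C · N^(1/4)` for a universal constant `C`. -/
theorem counting_pairs_dispersion :
    ∃ C : ℝ, 0 < C ∧ ∀ (A N : ℝ), 1 ≤ N → ∀ k : ℤ,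
      {q : ℤ × ℤ | q.1 + q.2 = k ∧
        |A + ((q.1 : ℝ) ^ 4 - (q.1 : ℝ) ^ 2) + ((q.2 : ℝ) ^ 4 - (q.2 : ℝ) ^ 2)| ≤ N}.Finite ∧
      (({q : ℤ × ℤ | q.1 + q.2 = k ∧
        |A + ((q.1 : ℝ) ^ 4 - (q.1 : ℝ) ^ 2) + ((q.2 : ℝ) ^ 4 - (q.2 : ℝ) ^ 2)| ≤ N}.ncard : ℝ)
        ≤ C * N ^ ((1 : ℝ) / 4)) := by
  refine ⟨9, by norm_num, fun A N hN k => ?_⟩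
  set S := {q : ℤ × ℤ | q.1 + q.2 = k ∧
        |A + ((q.1 : ℝ) ^ 4 - (q.1 : ℝ) ^ 2) + ((q.2 : ℝ) ^ 4 - (q.2 : ℝ) ^ 2)| ≤ N} with hS
  set B : ℝ := 8*A + (k:ℝ)^4 - 4*(k:ℝ)^2 with hB
  set c : ℝ := 6*(k:ℝ)^2 - 4 with hc'
  set M : ℝ := 8*N with hM'
  have hc : (-4:ℝ) ≤ c := by rw [hc']; nlinarith [sq_nonneg (k:ℝ)]
  have hM : (0:ℝ) ≤ M := by rw [hM']; linarith
  set X := {x : ℤ | |B + (x:ℝ)^4 + c * (x:ℝ)^2| ≤ M} with hX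
  set Y := {x : ℤ | 2 ≤ x ∧ |B + (x:ℝ)^4 + c * (x:ℝ)^2| ≤ M} with hY
  set ψ : ℤ × ℤ → ℤ := fun q => 2*q.1 - k with hψ
  -- the map sends S into X
  have hmap : ψ '' S ⊆ X := by
    rintro _ ⟨q, ⟨hsum, habs⟩, rfl⟩
    have hq2 : (q.2 : ℝ) = (k:ℝ) - (q.1:ℝ) := by
      have : q.2 = k - q.1 := by omega
      rw [this]; push_cast; ring
    have key : B + ((ψ q : ℤ):ℝ)^4 + c * ((ψ q : ℤ):ℝ)^2
        = 8 * (A + ((q.1 : ℝ) ^ 4 - (q.1 : ℝ) ^ 2) + ((q.2 : ℝ) ^ 4 - (q.2 : ℝ) ^ 2)) := by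
      rw [hB, hc', hψ]
      simp only
      rw [hq2]
      push_cast
      ring
    show |B + ((ψ q : ℤ):ℝ)^4 + c * ((ψ q : ℤ):ℝ)^2| ≤ M
    rw [key, abs_mul, abs_of_nonneg (by norm_num : (0:ℝ) ≤ 8), hM']
    nlinarith [habs]
  -- the map is injective on S
  have hinj : Set.InjOn ψ S := by
    intro q hq q' hq' h
    have h1 : q.1 = q'.1 := by simp only [hψ] at h; omega
    have h2 : q.2 = q'.2 := by
      have := hq.1; have := hq'.1; omega
    exact Prod.ext h1 h2
  -- X is contained in a tractable union
  have hXsub : X ⊆ Y ∪ (Neg.neg '' Y) ∪ (Set.Icc (-1:ℤ) 1) := by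
    intro x hx
    rcases le_or_gt 2 x with h2 | h2
    · exact Or.inl (Or.inl ⟨h2, hx⟩)
    · rcases le_or_gt x (-2) with h3 | h3
      · refine Or.inl (Or.inr ⟨-x, ⟨by omega, ?_⟩, by simp⟩)
        have e : B + ((-x:ℤ):ℝ)^4 + c * ((-x:ℤ):ℝ)^2 = B + (x:ℝ)^4 + c * (x:ℝ)^2 := by
          push_cast; ring
        show |B + ((-x:ℤ):ℝ)^4 + c * ((-x:ℤ):ℝ)^2| ≤ M
        rw [e]; exact hx
      · exact Or.inr ⟨by omega, by omega⟩
  obtain ⟨hYfin, hYcard⟩ := core_count c B M hc hM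
  have hNegfin : (Neg.neg '' Y).Finite := hYfin.image _
  have hNegcard : (Neg.neg '' Y).ncard = Y.ncard :=
    Set.ncard_image_of_injective _ neg_injective
  have hIccfin : (Set.Icc (-1:ℤ) 1).Finite := Set.finite_Icc _ _
  have hIcccard : (Set.Icc (-1:ℤ) 1).ncard = 3 := by
    rw [← Finset.coe_Icc, Set.ncard_coe_finset, Int.card_Icc]
    rfl
  have hXfin : X.Finite := ((hYfin.union hNegfin).union hIccfin).subset hXsub
  have hXcard : (X.ncard : ℝ) ≤ 2 * (Y.ncard : ℝ) + 3 := by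
    have u1 := Set.ncard_le_ncard hXsub ((hYfin.union hNegfin).union hIccfin)
    have u2 := Set.ncard_union_le (Y ∪ (Neg.neg '' Y)) (Set.Icc (-1:ℤ) 1)
    have u3 := Set.ncard_union_le Y (Neg.neg '' Y)
    rw [hNegcard] at u3
    rw [hIcccard] at u2
    have : X.ncard ≤ 2 * Y.ncard + 3 := by omega
    exact_mod_cast this
  -- S is finite
  have hSfin : S.Finite := Set.Finite.of_finite_image (hXfin.subset hmap) hinj
  refine ⟨hSfin, ?_⟩
  have hScard : (S.ncard : ℝ) ≤ (X.ncard : ℝ) := by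
    have : S.ncard = (ψ '' S).ncard := (Set.ncard_image_of_injOn hinj).symm
    rw [this]
    exact_mod_cast Set.ncard_le_ncard hmap hXfin
  -- numeric finale
  have h16 : (2*M) ^ ((1:ℝ)/4) = 2 * N ^ ((1:ℝ)/4) := by
    rw [hM', show (2:ℝ)*(8*N) = 16*N by ring,
      Real.mul_rpow (by norm_num) (by linarith)]
    congr 1
    rw [show (16:ℝ) = 2^(4:ℕ) by norm_num, ← Real.rpow_natCast 2 4,
      ← Real.rpow_mul (by norm_num)]
    norm_num
  have hN14 : 1 ≤ N ^ ((1:ℝ)/4) := by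
    have := Real.rpow_le_rpow (by norm_num) hN (by norm_num : (0:ℝ) ≤ 1/4)
    simpa using this
  rw [h16] at hYcard
  calc (S.ncard : ℝ) ≤ (X.ncard : ℝ) := hScard
  _ ≤ 2 * (Y.ncard : ℝ) + 3 := hXcard
  _ ≤ 2 * (2 * N ^ ((1:ℝ)/4) + 1) + 3 := by linarith
  _ ≤ 9 * N ^ ((1:ℝ)/4) := by linarith
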